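/- arXiv:2511.05759 — 5 statements merged into one kernel-verified Lean document; each statement's English description precedes it below -/
import Mathlib

section
/- Let Σ be a finite alphabet and m ≥ 1. A family F of infinite languages over Σ is not m-generatable if and only if there exists a non-empty subfamily S ⊆ F such that the intersection ⋂_{L∈S} L is finite and has cardinality at least m. -/
/-- A family `F` of languages over alphabet `α` is `m`-generatable: there exists a
generator `G` (mapping finite sequences of words to sets of words) such that for every
`L ∈ F`, every `n ≥ m` and every `n` pairwise-distinct words of `L`, the generated set
is an infinite subset of `L`. -/
def IsMGeneratable {α : Type*} (m : ℕ) (F : Set (Set (List α))) : Prop :=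
  ∃ G : List (List α) → Set (List α),
    ∀ L ∈ F, ∀ ws : List (List α), ws.Nodup → m ≤ ws.length →
      (∀ w ∈ ws, w ∈ L) → (G ws).Infinite ∧ G ws ⊆ L

/-- A family `F` of infinite languages over a finite alphabet is not `m`-generatable iff
there is a non-empty subfamily `S ⊆ F` whose intersection is finite of size at least `m`. -/
theorem not_mGeneratable_iff {A : Type*} [Fintype A] (m : ℕ) (hm : 1 ≤ m)
    (F : Set (Set (List A))) (hF : ∀ L ∈ F, L.Infinite) :
    ¬ IsMGeneratable m F ↔
      ∃ S : Set (Set (List A)), S ⊆ F ∧ S.Nonempty ∧ (⋂₀ S).Finite ∧ m ≤ (⋂₀ S).ncard := by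
  classical
  constructor
  · intro hnot
    by_contra hno
    push_neg at hno
    apply hnot
    refine ⟨fun ws => ⋂₀ {L | L ∈ F ∧ ∀ w ∈ ws, w ∈ L}, ?_⟩
    intro L hL ws hnd hlen hws
    have hLmem : L ∈ {L | L ∈ F ∧ ∀ w ∈ ws, w ∈ L} := ⟨hL, hws⟩
    set S := {L | L ∈ F ∧ ∀ w ∈ ws, w ∈ L} with hS
    constructor
    · by_contra hfin
      rw [Set.not_infinite] at hfin
      have hsub : (↑ws.toFinset : Set (List A)) ⊆ ⋂₀ S := by
        intro w hw
        rw [Finset.mem_coe, List.mem_toFinset] at hw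
        intro L' hL'
        exact hL'.2 w hw
      have hm' : m ≤ (⋂₀ S).ncard := by
        calc m ≤ ws.length := hlen
          _ = ws.toFinset.card := (List.toFinset_card_of_nodup hnd).symm
          _ = (↑ws.toFinset : Set (List A)).ncard := (Set.ncard_coe_finset _).symm
          _ ≤ (⋂₀ S).ncard := Set.ncard_le_ncard hsub hfin
      exact absurd hm' (not_le.mpr (hno S (fun L' hL' => hL'.1) ⟨L, hLmem⟩ hfin))
    · exact Set.sInter_subset_of_mem hLmem
  · rintro ⟨S, hSF, ⟨L0, hL0⟩, hfin, hcard⟩ ⟨G, hG⟩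
    set ws := hfin.toFinset.toList with hws
    have hnd : ws.Nodup := Finset.nodup_toList _
    have hlen : m ≤ ws.length := by
      rw [hws, Finset.length_toList]
      rwa [Set.ncard_eq_toFinset_card _ hfin] at hcard
    have hmem : ∀ w ∈ ws, w ∈ ⋂₀ S := by
      intro w hw
      rw [hws, Finset.mem_toList, Set.Finite.mem_toFinset] at hw
      exact hw
    have hGsub : G ws ⊆ ⋂₀ S := by
      intro x hx L hLS
      exact (hG L (hSF hLS) ws hnd hlen (fun w hw => hmem w hw L hLS)).2 hx
    have hGinf : (G ws).Infinite :=
      (hG L0 (hSF hL0) ws hnd hlen (fun w hw => hmem w hw L0 hL0)).1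
    exact hGinf (hfin.subset hGsub)
end

section
/- Let Σ be a finite alphabet, m ≥ 1, and F a family of infinite languages over Σ. If there exists a non-empty subfamily S ⊆ F such that ⋂_{L∈S} L is finite and has cardinality at least m, then F is not m-generatable. -/
/-- If some non-empty subfamily `S ⊆ F` has a finite intersection of size at least `m`,
then the family `F` of infinite languages is not `m`-generatable. -/
theorem not_mGeneratable_of_finite_inter {A : Type*} [Fintype A] (m : ℕ) (hm : 1 ≤ m)
    (F : Set (Set (List A))) (hF : ∀ L ∈ F, L.Infinite)
    (S : Set (Set (List A))) (hSF : S ⊆ F) (hS : S.Nonempty)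
    (hfin : (⋂₀ S).Finite) (hcard : m ≤ (⋂₀ S).ncard) :
    ¬ IsMGeneratable m F := by
  rintro ⟨G, hG⟩
  obtain ⟨t, ht, htcard⟩ := Finset.exists_subset_card_eq
    (show m ≤ hfin.toFinset.card by rwa [Set.ncard_eq_toFinset_card _ hfin] at hcard)
  set ws := t.toList with hws
  have hnodup : ws.Nodup := t.nodup_toList
  have hlen : m ≤ ws.length := by simp [hws, htcard]
  have hmem : ∀ w ∈ ws, w ∈ ⋂₀ S := by
    intro w hw
    have := ht (by simpa [hws] using hw)
    simpa using hfin.mem_toFinset.mp this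
  obtain ⟨L₀, hL₀⟩ := hS
  have hinf : (G ws).Infinite :=
    (hG L₀ (hSF hL₀) ws hnodup hlen fun w hw => (hmem w hw) L₀ hL₀).1
  have hsub : G ws ⊆ ⋂₀ S := by
    intro x hx L hL
    exact (hG L (hSF hL) ws hnodup hlen fun w hw => (hmem w hw) L hL).2 hx
  exact hinf (hfin.subset hsub)
end

section
/- Let Σ be a finite alphabet, m ≥ 1, and F a family of infinite languages over Σ. If every non-empty subfamily S ⊆ F whose intersection ⋂_{L∈S} L is finite satisfies |⋂_{L∈S} L| < m, then F is m-generatable; moreover, the generator G mapping any m distinct words w_1,…,w_m to the intersection of all languages L ∈ F containing w_1,…,w_m witnesses this. -/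
/-- If every non-empty subfamily of `F` with finite intersection has intersection of size
less than `m`, then `F` is `m`-generatable, and moreover the generator sending a tuple of
words to the intersection of all languages of `F` containing them witnesses this. -/
theorem mGeneratable_of_small_finite_inters {A : Type*} [Fintype A] (m : ℕ) (hm : 1 ≤ m)
    (F : Set (Set (List A))) (hF : ∀ L ∈ F, L.Infinite)
    (h : ∀ S : Set (Set (List A)), S ⊆ F → S.Nonempty → (⋂₀ S).Finite → (⋂₀ S).ncard < m) :
    IsMGeneratable m F ∧
      ∀ L ∈ F, ∀ ws : List (List A), ws.Nodup → m ≤ ws.length → (∀ w ∈ ws, w ∈ L) →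
        (⋂₀ {L' | L' ∈ F ∧ ∀ w ∈ ws, w ∈ L'}).Infinite ∧
          ⋂₀ {L' | L' ∈ F ∧ ∀ w ∈ ws, w ∈ L'} ⊆ L := by

  have key : ∀ L ∈ F, ∀ ws : List (List A), ws.Nodup → m ≤ ws.length → (∀ w ∈ ws, w ∈ L) →
      (⋂₀ {L' | L' ∈ F ∧ ∀ w ∈ ws, w ∈ L'}).Infinite ∧
        ⋂₀ {L' | L' ∈ F ∧ ∀ w ∈ ws, w ∈ L'} ⊆ L := by
    classical
    intro L hL ws hnd hlen hws
    set S : Set (Set (List A)) := {L' | L' ∈ F ∧ ∀ w ∈ ws, w ∈ L'} with hS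
    have hLS : L ∈ S := ⟨hL, hws⟩
    have hsub : ⋂₀ S ⊆ L := Set.sInter_subset_of_mem hLS
    refine ⟨?_, hsub⟩
    intro hfin
    have hSsub : S ⊆ F := fun L' hL' => hL'.1
    have hlt := h S hSsub ⟨L, hLS⟩ hfin
    have hws_sub : (ws.toFinset : Set (List A)) ⊆ ⋂₀ S := by
      intro w hw
      simp only [List.coe_toFinset, Set.mem_setOf_eq] at hw
      intro L' hL'
      exact hL'.2 w hw
    have hcard : m ≤ (⋂₀ S).ncard := by
      calc m ≤ ws.length := hlen
        _ = ws.toFinset.card := (List.toFinset_card_of_nodup hnd).symm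
        _ = (ws.toFinset : Set (List A)).ncard := (Set.ncard_coe_finset _).symm
        _ ≤ (⋂₀ S).ncard := Set.ncard_le_ncard hws_sub hfin
    omega
  refine ⟨⟨fun ws => ⋂₀ {L' | L' ∈ F ∧ ∀ w ∈ ws, w ∈ L'}, ?_⟩, key⟩
  intro L hL ws hnd hlen hws
  exact key L hL ws hnd hlen hws
end

section
/- Every finite family F of infinite languages over a finite alphabet Σ is m-generatable for some integer m ≥ 1. -/
/-- Every finite family of infinite languages over a finite alphabet is `m`-generatable
for some integer `m ≥ 1`. -/
theorem finite_family_mGeneratable {A : Type*} [Fintype A]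
    (F : Set (Set (List A))) (hfin : F.Finite) (hF : ∀ L ∈ F, L.Infinite) :
    ∃ m : ℕ, 1 ≤ m ∧ IsMGeneratable m F := by
  classical
  set P : Set (Set (Set (List A))) := {G | G ⊆ F ∧ (⋂₀ G).Finite} with hP
  have hPfin : P.Finite := hfin.finite_subsets.subset (fun G h => h.1)
  obtain ⟨m₀, hm₀⟩ := (hPfin.image (fun G => (⋂₀ G).ncard)).bddAbove
  refine ⟨m₀ + 1, by omega, ?_⟩
  refine ⟨fun ws => ⋂₀ {L' | L' ∈ F ∧ ∀ w ∈ ws, w ∈ L'}, ?_⟩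
  intro L hL ws hnd hlen hmem
  have hLG : L ∈ {L' | L' ∈ F ∧ ∀ w ∈ ws, w ∈ L'} := ⟨hL, hmem⟩
  constructor
  · by_contra hcon
    rw [Set.not_infinite] at hcon
    have hmemP : {L' | L' ∈ F ∧ ∀ w ∈ ws, w ∈ L'} ∈ P := ⟨fun _ h => h.1, hcon⟩
    have hle : (⋂₀ {L' | L' ∈ F ∧ ∀ w ∈ ws, w ∈ L'}).ncard ≤ m₀ :=
      hm₀ ⟨_, hmemP, rfl⟩
    have hsub : ↑ws.toFinset ⊆ ⋂₀ {L' | L' ∈ F ∧ ∀ w ∈ ws, w ∈ L'} := by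
      intro w hw
      simp only [Finset.coe_sort_coe, List.coe_toFinset, Set.mem_setOf_eq] at hw
      exact fun L' hL' => hL'.2 w hw
    have hcard : ws.length ≤ (⋂₀ {L' | L' ∈ F ∧ ∀ w ∈ ws, w ∈ L'}).ncard := by
      calc ws.length = ws.toFinset.card := (List.toFinset_card_of_nodup hnd).symm
        _ = (↑ws.toFinset : Set (List A)).ncard := (Set.ncard_coe_finset _).symm
        _ ≤ _ := Set.ncard_le_ncard hsub hcon
    omega
  · exact Set.sInter_subset_of_mem hLG
end

section
/- Let n, k ∈ ℕ with n, k ≥ 1, and let F be a family of infinite regular languages over the binary alphabet {0,1} such that |F| = k and each L ∈ F is accepted by a (nondeterministic) finite automaton with at most n states. Then F is 2^(n^k)-generatable. -/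
/-- A (nondeterministic) finite automaton with state type `σ`: an initial state, a set of
final states, and a transition relation `Δ ⊆ Q × Σ × Q`. -/
structure FinAut (α : Type*) (σ : Type*) where
  start : σ
  accept : Set σ
  trans : σ → α → σ → Prop

/-- The language accepted by a finite automaton: words admitting a run from the initial
state ending in a final state. -/
def FinAut.accepts {α σ : Type*} (M : FinAut α σ) : Set (List α) :=
  NFA.accepts ⟨fun s a => {t | M.trans s a t}, {M.start}, M.accept⟩

/-!
The generator intersects all languages of the family that contain the given words. This
intersection is accepted by the product automaton, which has at most `n ^ k` states, and among
`2 ^ n ^ k` distinct binary words one has length at least `n ^ k`, as fewer words are shorter.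
A run of an automaton on a word at least as long as its number of states repeats a state, so the
word can be pumped and the intersection is infinite.
-/

def FinAut.toNFA {α σ : Type*} (M : FinAut α σ) : NFA α σ :=
  ⟨fun s a => {t | M.trans s a t}, {M.start}, M.accept⟩

namespace NFA

section Pumping

variable {α : Type*} {σ : Type*} (M : NFA α σ)

theorem mem_evalFrom_singleton_cons {s t : σ} {a : α} {x : List α} :
    t ∈ M.evalFrom {s} (a :: x) ↔ ∃ u ∈ M.step s a, t ∈ M.evalFrom {u} x := by
  rw [evalFrom_cons, stepSet_singleton, mem_evalFrom_iff_exists]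

theorem mem_evalFrom_singleton_append {s t : σ} {x y : List α} :
    t ∈ M.evalFrom {s} (x ++ y) ↔ ∃ u ∈ M.evalFrom {s} x, t ∈ M.evalFrom {u} y := by
  rw [evalFrom_append, mem_evalFrom_iff_exists]

theorem mem_evalFrom_flatten_replicate {u : σ} {b : List α} (hb : u ∈ M.evalFrom {u} b) :
    ∀ m, u ∈ M.evalFrom {u} (List.replicate m b).flatten
  | 0 => by simp
  | m + 1 => by
    rw [List.replicate_succ, List.flatten_cons, mem_evalFrom_singleton_append]
    exact ⟨u, hb, mem_evalFrom_flatten_replicate hb m⟩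

theorem infinite_of_loop {u t : σ} {b c : List α} (hb : b ≠ []) (hloop : u ∈ M.evalFrom {u} b)
    (hc : t ∈ M.evalFrom {u} c) : {y | t ∈ M.evalFrom {u} y}.Infinite := by
  refine Set.infinite_of_injective_forall_mem (f := fun m => (List.replicate m b).flatten ++ c)
    (fun m m' h => ?_) fun m => ?_
  · have hlen := congrArg List.length h
    simp only [List.length_append, List.length_flatten, List.map_replicate, List.sum_replicate,
      smul_eq_mul, Nat.add_right_cancel_iff] at hlen
    exact Nat.eq_of_mul_eq_mul_right (List.length_pos_iff.mpr hb) hlen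
  · exact (mem_evalFrom_singleton_append M).mpr ⟨u, mem_evalFrom_flatten_replicate M hloop m, hc⟩

/-- `V` is the set of states of a run on `x` that repeats no state; a run that does repeat one
contains a loop, which can be pumped. -/
theorem infinite_or_exists_card_eq {s t : σ} {x : List α} (h : t ∈ M.evalFrom {s} x) :
    {y | t ∈ M.evalFrom {s} y}.Infinite ∨ ∃ V : Finset σ, V.card = x.length + 1 ∧
      ∀ u ∈ V, ∃ a c, x = a ++ c ∧ u ∈ M.evalFrom {s} a ∧ t ∈ M.evalFrom {u} c := by
  classical
  induction x generalizing s with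
  | nil =>
    refine Or.inr ⟨{s}, rfl, fun u hu => ⟨[], [], rfl, ?_, ?_⟩⟩ <;>
      simp_all
  | cons l x ih =>
    obtain ⟨s₁, hs₁, ht⟩ := (mem_evalFrom_singleton_cons M).mp h
    rcases ih ht with hinf | ⟨V, hcard, hV⟩
    · refine Or.inl ((hinf.image (List.cons_injective (a := l)).injOn).mono ?_)
      rintro _ ⟨y, hy, rfl⟩
      exact (mem_evalFrom_singleton_cons M).mpr ⟨s₁, hs₁, hy⟩
    by_cases hsV : s ∈ V
    · obtain ⟨a, c, -, hloop, hc⟩ := hV s hsV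
      exact Or.inl (M.infinite_of_loop (List.cons_ne_nil l a)
        ((mem_evalFrom_singleton_cons M).mpr ⟨s₁, hs₁, hloop⟩) hc)
    · refine Or.inr ⟨insert s V, by rw [Finset.card_insert_of_notMem hsV, hcard]; rfl, ?_⟩
      intro u hu
      rcases Finset.mem_insert.mp hu with rfl | hu
      · exact ⟨[], l :: x, rfl, by simp, h⟩
      · obtain ⟨a, c, rfl, ha, hc⟩ := hV u hu
        exact ⟨l :: a, c, rfl, (mem_evalFrom_singleton_cons M).mpr ⟨s₁, hs₁, ha⟩, hc⟩

theorem infinite_of_card_le_length [Fintype σ] {s t : σ} {x : List α}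
    (h : t ∈ M.evalFrom {s} x) (hlen : Fintype.card σ ≤ x.length) :
    {y | t ∈ M.evalFrom {s} y}.Infinite := by
  refine (M.infinite_or_exists_card_eq h).resolve_right ?_
  rintro ⟨V, hcard, -⟩
  have := V.card_le_univ
  omega

/-- Unlike `NFA.pumping_lemma`, which goes through the subset construction, this needs a word
only as long as the number of states, not of sets of states. -/
theorem accepts_infinite_of_card_le_length [Fintype σ] {x : List α} (hx : x ∈ M.accepts)
    (hlen : Fintype.card σ ≤ x.length) : M.accepts.Infinite := by
  obtain ⟨t, ht, hx⟩ := hx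
  obtain ⟨s, hs, hst⟩ := mem_evalFrom_iff_exists.mp hx
  exact (M.infinite_of_card_le_length hst hlen).mono fun y hy =>
    ⟨t, ht, mem_evalFrom_iff_exists.mpr ⟨s, hs, hy⟩⟩

end Pumping

section Product

variable {α : Type*} {ι : Type*} {σ : ι → Type*} (M : ∀ i, NFA α (σ i))

def pi : NFA α (∀ i, σ i) where
  step f a := Set.univ.pi fun i => (M i).step (f i) a
  start := Set.univ.pi fun i => (M i).start
  accept := Set.univ.pi fun i => (M i).accept

theorem stepSet_pi (S : ∀ i, Set (σ i)) (a : α) :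
    (pi M).stepSet (Set.univ.pi S) a = Set.univ.pi fun i => (M i).stepSet (S i) a := by
  ext g
  simp only [mem_stepSet, pi, Set.mem_univ_pi]
  constructor
  · rintro ⟨f, hf, hg⟩ i
    exact ⟨f i, hf i, hg i⟩
  · intro hg
    choose f hf hg using hg
    exact ⟨f, hf, hg⟩

theorem evalFrom_pi (S : ∀ i, Set (σ i)) (x : List α) :
    (pi M).evalFrom (Set.univ.pi S) x = Set.univ.pi fun i => (M i).evalFrom (S i) x := by
  induction x generalizing S with
  | nil => rfl
  | cons a x ih => simp only [evalFrom_cons, stepSet_pi, ih]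

theorem mem_accepts_pi {x : List α} : x ∈ (pi M).accepts ↔ ∀ i, x ∈ (M i).accepts := by
  have hstart : (pi M).start = Set.univ.pi fun i => (M i).start := rfl
  simp only [mem_accepts]
  rw [hstart, evalFrom_pi]
  constructor
  · rintro ⟨f, hf, hx⟩ i
    exact ⟨f i, hf i trivial, hx i trivial⟩
  · intro hx
    choose f hf hx using hx
    exact ⟨f, fun i _ => hf i, fun i _ => hx i⟩

theorem infinite_setOf_forall_mem_accepts [Fintype ι] [DecidableEq ι] [∀ i, Fintype (σ i)]
    {n : ℕ} (hσ : ∀ i, Fintype.card (σ i) ≤ n) {x : List α} (hx : ∀ i, x ∈ (M i).accepts)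
    (hlen : n ^ Fintype.card ι ≤ x.length) : {y | ∀ i, y ∈ (M i).accepts}.Infinite := by
  refine ((pi M).accepts_infinite_of_card_le_length ((mem_accepts_pi M).mpr hx) ?_).mono
    fun y hy => (mem_accepts_pi M).mp hy
  calc Fintype.card (∀ i, σ i) = ∏ i, Fintype.card (σ i) := Fintype.card_pi
    _ ≤ n ^ Fintype.card ι := Finset.prod_le_pow_card _ _ _ fun i _ => hσ i
    _ ≤ x.length := hlen

end Product

end NFA

theorem List.exists_mem_le_length_of_nodup {α : Type*} [Fintype α] (hα : 2 ≤ Fintype.card α)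
    {ws : List (List α)} (hws : ws.Nodup) {m : ℕ} (hm : Fintype.card α ^ m ≤ ws.length) :
    ∃ w ∈ ws, m ≤ w.length := by
  classical
  by_contra! hshort
  let f : ws.toFinset → Σ i : Fin m, List.Vector α i :=
    fun w => ⟨⟨w.1.length, hshort w.1 (List.mem_toFinset.mp w.2)⟩, ⟨w.1, rfl⟩⟩
  have hf : Function.Injective f :=
    Function.Injective.of_comp (f := fun p => p.2.1) Subtype.val_injective
  have hcard := Fintype.card_le_of_injective f hf
  rw [Fintype.card_coe, List.toFinset_card_of_nodup hws, Fintype.card_sigma] at hcard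
  simp only [card_vector] at hcard
  rw [Fin.sum_univ_eq_sum_range (fun i => Fintype.card α ^ i)] at hcard
  have := Nat.geomSum_lt hα (s := Finset.range m) fun _ => Finset.mem_range.mp
  omega

theorem mGeneratable_of_nfa_family_general (n k : ℕ) (hn : 1 ≤ n)
    (F : Set (Set (List (Fin 2)))) (hfin : F.Finite) (hcard : F.ncard = k)
    (hacc : ∀ L ∈ F, ∃ (σ : Type) (_ : Fintype σ) (M : FinAut (Fin 2) σ),
      Fintype.card σ ≤ n ∧ M.accepts = L) :
    IsMGeneratable (2 ^ n ^ k) F := by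
  classical
  have hnfa : ∀ L ∈ F, ∃ (σ : Type) (_ : Fintype σ) (M : NFA (Fin 2) σ),
      Fintype.card σ ≤ n ∧ M.accepts = L := fun L hL =>
    let ⟨σ, _, M, hM⟩ := hacc L hL
    ⟨σ, _, M.toNFA, hM⟩
  choose σ _ M hMcard hM using hnfa
  refine ⟨fun ws => ⋂₀ {L | L ∈ F ∧ ∀ w ∈ ws, w ∈ L},
    fun L hL ws hws hlen hmem => ⟨?_, Set.sInter_subset_of_mem ⟨hL, hmem⟩⟩⟩
  set S := {L | L ∈ F ∧ ∀ w ∈ ws, w ∈ L}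
  have : Fintype S := (hfin.subset fun _ h => h.1).fintype
  have hS : Fintype.card S ≤ k := by
    rw [← hcard, ← Nat.card_eq_fintype_card, Nat.card_coe_set_eq]
    exact Set.ncard_le_ncard (fun _ h => h.1) hfin
  obtain ⟨w, hw, hwlen⟩ :=
    List.exists_mem_le_length_of_nodup (by simp) hws (m := n ^ k) (by simpa using hlen)
  refine (NFA.infinite_setOf_forall_mem_accepts (fun L : S => M L L.2.1) (fun L => hMcard _ _)
    (fun L => (hM L L.2.1).symm ▸ L.2.2 w hw) ((Nat.pow_le_pow_right hn hS).trans hwlen)).mono ?_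
  exact fun y hy L' hL' => hM L' hL'.1 ▸ hy ⟨L', hL'⟩

/-- A family of `k` infinite regular languages over the binary alphabet, each accepted by a
finite automaton with at most `n` states, is `2 ^ (n ^ k)`-generatable. -/
theorem mGeneratable_of_nfa_family (n k : ℕ) (hn : 1 ≤ n) (hk : 1 ≤ k)
    (F : Set (Set (List (Fin 2)))) (hfin : F.Finite) (hcard : F.ncard = k)
    (hinf : ∀ L ∈ F, L.Infinite)
    (hacc : ∀ L ∈ F, ∃ (σ : Type) (_ : Fintype σ) (M : FinAut (Fin 2) σ),
      Fintype.card σ ≤ n ∧ M.accepts = L) :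
    IsMGeneratable (2 ^ n ^ k) F :=
  mGeneratable_of_nfa_family_general n k hn F hfin hcard hacc
end
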